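/- arXiv:1604.02087 — 2 statements merged into one kernel-verified Lean document; each statement's English description precedes it below -/
import Mathlib

section
/- Let N be a large positive integer, α₂ ∈ [1/2,1] fixed, and δ ∈ (0,1). Then the number of quadruples (x₁,x₂,x₃,x₄) of integers with N/4 ≤ xᵢ ≤ N for all i and |(x₁² - x₃²) + α₂(x₂² - x₄²)| < δ is at most C(ε) · N^(2+ε) for every ε > 0, where C(ε) is independent of N, δ and α₂. -/
/-!
Write `u = x₁² - x₃²` and `v = x₂² - x₄²`. The diagonal `x₁ = x₃, x₂ = x₄` contributes `N²`
quadruples. Off it, both `u` and `v` are nonzero: a nonzero difference of two positive squares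
has absolute value at least `2`, which is incompatible with `|u + α₂ v| < 1` and `α₂ ≥ 1/2` if
only one of them vanishes. A nonzero `u` is a difference `a² - b²` with `a + b > 0` in at most
`d(|u|) ≪ N^(ε/2)` ways, since `a - b` is a divisor determining `(a, b)`. Finally, for each of the
`2N² + 1` values of `v` at most two integers `u` satisfy `|u + α₂ v| < δ ≤ 1`.
-/

open Finset

section DivisorBound

variable {ε : ℝ}

lemma add_one_le_mul_two_rpow (hε : 0 < ε) (e : ℕ) :
    (e : ℝ) + 1 ≤ (1 + 1 / (ε * Real.log 2)) * 2 ^ (e * ε) := by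
  set c := ε * Real.log 2
  have hc : 0 < c := mul_pos hε (Real.log_pos one_lt_two)
  have hexp : 1 + e * c ≤ (2 : ℝ) ^ (e * ε) := by
    rw [Real.rpow_def_of_pos two_pos]
    linarith [Real.add_one_le_exp (Real.log 2 * (e * ε))]
  have hexpand : (1 + 1 / c) * (1 + e * c) = e + 1 + (e * c + 1 / c) := by
    field_simp; ring
  calc (e : ℝ) + 1 ≤ (1 + 1 / c) * (1 + e * c) := by
        rw [hexpand]; linarith [mul_nonneg (Nat.cast_nonneg e) hc.le, one_div_pos.2 hc]
    _ ≤ (1 + 1 / c) * 2 ^ (e * ε) := by gcongr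

lemma add_one_le_pow_rpow {x : ℝ} (hx : 0 ≤ x) (h : 2 ≤ x ^ ε) (e : ℕ) :
    (e : ℝ) + 1 ≤ (x ^ e) ^ ε :=
  calc (e : ℝ) + 1 ≤ 2 ^ e := by exact_mod_cast Nat.lt_two_pow_self
    _ ≤ (x ^ ε) ^ e := pow_le_pow_left₀ zero_le_two h e
    _ = (x ^ e) ^ ε := Real.rpow_pow_comm hx ε e

lemma add_one_le_ite_mul_pow_rpow (hε : 0 < ε) {p : ℕ} (hp : 2 ≤ p) (e : ℕ) :
    (e : ℝ) + 1 ≤ (if p < ⌈(2 : ℝ) ^ ε⁻¹⌉₊ then 1 + 1 / (ε * Real.log 2) else 1) *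
      ((p : ℝ) ^ e) ^ ε := by
  split_ifs with hsmall
  · have : 0 < ε * Real.log 2 := mul_pos hε (Real.log_pos one_lt_two)
    calc (e : ℝ) + 1 ≤ (1 + 1 / (ε * Real.log 2)) * 2 ^ (e * ε) := add_one_le_mul_two_rpow hε e
      _ = (1 + 1 / (ε * Real.log 2)) * ((2 : ℝ) ^ e) ^ ε := by
          rw [Real.rpow_natCast_mul zero_le_two]
      _ ≤ (1 + 1 / (ε * Real.log 2)) * ((p : ℝ) ^ e) ^ ε := by gcongr; exact_mod_cast hp
  · rw [one_mul]
    refine add_one_le_pow_rpow (Nat.cast_nonneg p) ?_ e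
    calc (2 : ℝ) = ((2 : ℝ) ^ ε⁻¹) ^ ε := (Real.rpow_inv_rpow zero_le_two hε.ne').symm
      _ ≤ (p : ℝ) ^ ε := by gcongr; exact Nat.ceil_le.1 (not_lt.1 hsmall)

/-- Each prime `p ∣ n` with `p ^ ε ≥ 2` contributes a factor `e + 1 ≤ (p ^ e) ^ ε` to `d(n)`;
the primes below `2 ^ ε⁻¹` contribute at most the extra constant `1 + 1 / (ε log 2)` each. -/
theorem exists_card_divisors_le_mul_rpow (hε : 0 < ε) :
    ∃ C : ℝ, 0 < C ∧ ∀ n : ℕ, n ≠ 0 → (#n.divisors : ℝ) ≤ C * (n : ℝ) ^ ε := by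
  set B := 1 + 1 / (ε * Real.log 2)
  set K := ⌈(2 : ℝ) ^ ε⁻¹⌉₊
  have hB : 1 ≤ B := le_add_of_nonneg_right (by have := Real.log_pos one_lt_two; positivity)
  refine ⟨B ^ K, by positivity, fun n hn => ?_⟩
  have hsmall : ∏ p ∈ n.primeFactors, (if p < K then B else 1) ≤ B ^ K := by
    rw [← prod_filter, prod_const]
    exact pow_le_pow_right₀ hB
      ((card_le_card fun p hp => mem_range.2 (mem_filter.1 hp).2).trans_eq (card_range K))
  have hpow : ∏ p ∈ n.primeFactors, ((p : ℝ) ^ n.factorization p) ^ ε = (n : ℝ) ^ ε := by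
    rw [Real.finsetProd_rpow _ _ fun _ _ => by positivity]
    congr 1
    exact_mod_cast Nat.prod_factorization_pow_eq_self hn
  calc (#n.divisors : ℝ) = ∏ p ∈ n.primeFactors, ((n.factorization p : ℝ) + 1) := by
        rw [Nat.card_divisors hn]; push_cast; rfl
    _ ≤ ∏ p ∈ n.primeFactors, ((if p < K then B else 1) * ((p : ℝ) ^ n.factorization p) ^ ε) :=
        prod_le_prod (fun _ _ => by positivity) fun p hp =>
          add_one_le_ite_mul_pow_rpow hε (Nat.prime_of_mem_primeFactors hp).two_le _
    _ = (∏ p ∈ n.primeFactors, (if p < K then B else 1)) * (n : ℝ) ^ ε := by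
        rw [prod_mul_distrib, hpow]
    _ ≤ B ^ K * (n : ℝ) ^ ε := by gcongr

end DivisorBound

lemma card_le_card_divisors_of_sq_sub_sq_eq {s : Finset (ℤ × ℤ)} {u : ℤ} (hu : u ≠ 0)
    (hs : ∀ p ∈ s, 0 < p.1 + p.2 ∧ p.1 ^ 2 - p.2 ^ 2 = u) : #s ≤ #u.natAbs.divisors := by
  refine card_le_card_of_injOn (fun p => (p.1 - p.2).natAbs) (fun p hp => ?_) ?_
  · obtain ⟨-, hpu⟩ := hs p hp
    refine Nat.mem_divisors.2 ⟨Int.natAbs_dvd_natAbs.2 ⟨p.1 + p.2, ?_⟩, Int.natAbs_ne_zero.2 hu⟩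
    rw [← hpu]; ring
  · rintro ⟨a, b⟩ hp ⟨c, d⟩ hq (h : (a - b).natAbs = (c - d).natAbs)
    obtain ⟨hab, hab'⟩ := hs _ hp
    obtain ⟨hcd, hcd'⟩ := hs _ hq
    dsimp only at hab hab' hcd hcd'
    have hne : a - b ≠ 0 := fun h0 => hu (by rw [← hab']; linear_combination (a + b) * h0)
    have hfac : (a - b) * (a + b) = (c - d) * (c + d) := by linear_combination hab' - hcd'
    have hdiff : a - b = c - d := by
      refine (Int.natAbs_eq_natAbs_iff.1 h).resolve_right fun hneg => ?_
      have : (a - b) * (a + b + c + d) = 0 := by linear_combination hfac + (c + d) * hneg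
      rcases mul_eq_zero.1 this with h0 | h0 <;> [exact hne h0; omega]
    have hsum : a + b = c + d := mul_left_cancel₀ hne (by rw [hfac, hdiff])
    simp only [Prod.mk.injEq]; omega

lemma card_filter_abs_sub_lt_le_two (s : Finset ℤ) (t : ℝ) {δ : ℝ} (hδ : δ ≤ 1) :
    #{u ∈ s | |((u : ℤ) : ℝ) - t| < δ} ≤ 2 := by
  refine (card_le_card fun u hu => ?_).trans (card_le_two (a := ⌊t⌋) (b := ⌊t⌋ + 1))
  obtain ⟨hlo, hhi⟩ := abs_lt.1 (mem_filter.1 hu).2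
  have h1 : ⌊t⌋ ≤ u := Int.floor_le_iff.2 (by linarith)
  have h2 : u < ⌊t⌋ + 2 := by
    have := Int.lt_floor_add_one t
    exact_mod_cast (show (u : ℝ) < ⌊t⌋ + 2 by linarith)
  rw [mem_insert, mem_singleton]; omega

noncomputable def nearPairs (M : ℕ) (α δ : ℝ) : Finset (ℤ × ℤ) :=
  {w ∈ Icc (-(M : ℤ)) M ×ˢ Icc (-(M : ℤ)) M | |(w.1 : ℝ) + α * w.2| < δ}

lemma card_nearPairs_le (M : ℕ) (α : ℝ) {δ : ℝ} (hδ : δ ≤ 1) :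
    #(nearPairs M α δ) ≤ 2 * (2 * M + 1) := by
  have hbox : #(Icc (-(M : ℤ)) M) = 2 * M + 1 := by
    rw [Int.card_Icc]; omega
  rw [← hbox]
  refine card_le_mul_card_image_of_maps_to (f := Prod.snd)
    (fun w hw => (mem_product.1 (mem_filter.1 hw).1).2) 2 fun v _ => ?_
  calc #{w ∈ nearPairs M α δ | w.2 = v}
      ≤ #({u ∈ Icc (-(M : ℤ)) M | |((u : ℤ) : ℝ) - -(α * v)| < δ} ×ˢ {v}) := by
        refine card_le_card fun w hw => ?_
        simp only [nearPairs, mem_filter, mem_product] at hw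
        obtain ⟨⟨⟨hu, -⟩, hw⟩, rfl⟩ := hw
        simpa [mem_product, hu] using hw
    _ ≤ 2 := by
        rw [card_product, card_singleton, mul_one]
        exact card_filter_abs_sub_lt_le_two _ _ hδ

lemma two_le_abs_sq_sub_sq {a b : ℤ} (ha : 0 < a) (hb : 0 < b) (hab : a ≠ b) :
    (2 : ℝ) ≤ |(a : ℝ) ^ 2 - (b : ℝ) ^ 2| := by
  have : 2 ≤ |a ^ 2 - b ^ 2| := by
    rcases hab.lt_or_gt with h | h
    · rw [abs_of_neg (by nlinarith)]; nlinarith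
    · rw [abs_of_pos (by nlinarith)]; nlinarith
  exact_mod_cast this

lemma sq_sub_sq_ne_zero_of_abs_lt_one {a b c d : ℤ} (ha : 0 < a) (hb : 0 < b) (hc : 0 < c)
    (hd : 0 < d) {α : ℝ} (hα : 1 / 2 ≤ α)
    (h : |((a : ℝ) ^ 2 - (b : ℝ) ^ 2) + α * ((c : ℝ) ^ 2 - (d : ℝ) ^ 2)| < 1)
    (hne : ¬(a = b ∧ c = d)) : a ^ 2 - b ^ 2 ≠ 0 ∧ c ^ 2 - d ^ 2 ≠ 0 := by
  by_cases hab : a = b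
  · subst hab
    have hv := two_le_abs_sq_sub_sq hc hd fun hcd => hne ⟨rfl, hcd⟩
    rw [sub_self, zero_add, abs_mul, abs_of_pos (by linarith)] at h
    nlinarith
  · have hu := two_le_abs_sq_sub_sq ha hb hab
    refine ⟨fun hu0 => ?_, fun hv0 => ?_⟩
    · rw [show (a : ℝ) ^ 2 - (b : ℝ) ^ 2 = 0 by exact_mod_cast hu0] at hu
      norm_num at hu
    · rw [show (c : ℝ) ^ 2 - (d : ℝ) ^ 2 = 0 by exact_mod_cast hv0, mul_zero, add_zero] at h
      linarith

noncomputable def sqDiffReps (N : ℕ) (u : ℤ) : Finset (ℤ × ℤ) :=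
  {p ∈ Icc 1 (N : ℤ) ×ˢ Icc 1 (N : ℤ) | p.1 ^ 2 - p.2 ^ 2 = u}

lemma card_sqDiffReps_le (N : ℕ) {u : ℤ} (hu : u ≠ 0) :
    #(sqDiffReps N u) ≤ #u.natAbs.divisors :=
  card_le_card_divisors_of_sq_sub_sq_eq hu fun p hp => by
    simp only [sqDiffReps, mem_filter, mem_product, mem_Icc] at hp
    exact ⟨by omega, hp.2⟩

noncomputable def nearSolutions (N : ℕ) (α δ : ℝ) : Finset (ℤ × ℤ × ℤ × ℤ) :=
  {x ∈ Icc 1 (N : ℤ) ×ˢ Icc 1 (N : ℤ) ×ˢ Icc 1 (N : ℤ) ×ˢ Icc 1 (N : ℤ) |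
    |((x.1 : ℝ) ^ 2 - (x.2.2.1 : ℝ) ^ 2) + α * ((x.2.1 : ℝ) ^ 2 - (x.2.2.2 : ℝ) ^ 2)| < δ}

lemma card_filter_diagonal_nearSolutions_le (N : ℕ) (α δ : ℝ) :
    #{x ∈ nearSolutions N α δ | x.1 = x.2.2.1 ∧ x.2.1 = x.2.2.2} ≤ N ^ 2 := by
  calc #{x ∈ nearSolutions N α δ | x.1 = x.2.2.1 ∧ x.2.1 = x.2.2.2}
      ≤ #(Icc 1 (N : ℤ) ×ˢ Icc 1 (N : ℤ)) := by
        refine card_le_card_of_injOn (fun x => (x.1, x.2.1)) (fun x hx => ?_) ?_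
        · rw [mem_coe, mem_filter, nearSolutions, mem_filter] at hx
          exact mem_product.2 ⟨(mem_product.1 hx.1.1).1, (mem_product.1 (mem_product.1 hx.1.1).2).1⟩
        · rintro ⟨a, b, c, d⟩ hx ⟨a', b', c', d'⟩ hx' h
          obtain ⟨-, hac, hbd⟩ := mem_filter.1 hx
          obtain ⟨-, hac', hbd'⟩ := mem_filter.1 hx'
          dsimp only at hac hbd hac' hbd'
          subst hac hbd hac' hbd'
          obtain ⟨rfl, rfl⟩ := Prod.mk.inj h
          rfl
    _ = N ^ 2 := by simp [sq]

def sqDiffs (x : ℤ × ℤ × ℤ × ℤ) : ℤ × ℤ := (x.1 ^ 2 - x.2.2.1 ^ 2, x.2.1 ^ 2 - x.2.2.2 ^ 2)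

lemma card_filter_sqDiffs_eq_le (N : ℕ) (α δ : ℝ) (w : ℤ × ℤ) :
    #{x ∈ nearSolutions N α δ | sqDiffs x = w} ≤ #(sqDiffReps N w.1) * #(sqDiffReps N w.2) := by
  rw [← card_product]
  refine card_le_card_of_injOn (fun x => ((x.1, x.2.2.1), (x.2.1, x.2.2.2)))
    (fun x hx => ?_) fun x _ y _ h => ?_
  · obtain ⟨hxS, rfl⟩ := mem_filter.1 hx
    replace hxS := (mem_filter.1 hxS).1
    simp only [mem_product] at hxS
    exact mem_product.2 ⟨mem_filter.2 ⟨mem_product.2 ⟨hxS.1, hxS.2.2.1⟩, rfl⟩,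
      mem_filter.2 ⟨mem_product.2 ⟨hxS.2.1, hxS.2.2.2⟩, rfl⟩⟩
  · simp only [Prod.mk.injEq] at h
    exact Prod.ext h.1.1 (Prod.ext h.2.1 (Prod.ext h.1.2 h.2.2))

lemma sqDiffs_mem_nearPairs {N : ℕ} {α δ : ℝ} (hα : 1 / 2 ≤ α) (hδ : δ < 1)
    {x : ℤ × ℤ × ℤ × ℤ} (hx : x ∈ nearSolutions N α δ)
    (hdiag : ¬(x.1 = x.2.2.1 ∧ x.2.1 = x.2.2.2)) :
    sqDiffs x ∈ {w ∈ nearPairs (N ^ 2) α δ | w.1 ≠ 0 ∧ w.2 ≠ 0} := by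
  obtain ⟨hbox, hlt⟩ := mem_filter.1 hx
  simp only [mem_product, mem_Icc] at hbox
  obtain ⟨⟨h1, h1'⟩, ⟨h2, h2'⟩, ⟨h3, h3'⟩, ⟨h4, h4'⟩⟩ := hbox
  obtain ⟨hu, hv⟩ := sq_sub_sq_ne_zero_of_abs_lt_one (by omega) (by omega) (by omega) (by omega)
    hα (hlt.trans hδ) hdiag
  refine mem_filter.2 ⟨mem_filter.2 ⟨mem_product.2 ⟨mem_Icc.2 ⟨?_, ?_⟩, mem_Icc.2 ⟨?_, ?_⟩⟩, ?_⟩,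
    hu, hv⟩
  all_goals push_cast [sqDiffs]
  · nlinarith
  · nlinarith
  · nlinarith
  · nlinarith
  · exact hlt

lemma card_filter_not_diagonal_nearSolutions_le {N : ℕ} (hN : 1 ≤ N) {α δ : ℝ} (hα : 1 / 2 ≤ α)
    (hδ : δ < 1) {D : ℕ} (hD : ∀ u : ℤ, u ≠ 0 → |u| ≤ N ^ 2 → #(sqDiffReps N u) ≤ D) :
    #{x ∈ nearSolutions N α δ | ¬(x.1 = x.2.2.1 ∧ x.2.1 = x.2.2.2)} ≤ 6 * D ^ 2 * N ^ 2 := by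
  calc #{x ∈ nearSolutions N α δ | ¬(x.1 = x.2.2.1 ∧ x.2.1 = x.2.2.2)}
      ≤ D ^ 2 * #{w ∈ nearPairs (N ^ 2) α δ | w.1 ≠ 0 ∧ w.2 ≠ 0} := by
        refine card_le_mul_card_image_of_maps_to (f := sqDiffs)
          (fun x hx => sqDiffs_mem_nearPairs hα hδ (mem_filter.1 hx).1 (mem_filter.1 hx).2) _
          fun w hw => ?_
        obtain ⟨hw, hu, hv⟩ := mem_filter.1 hw
        obtain ⟨hwu, hwv⟩ := mem_product.1 (mem_filter.1 hw).1
        calc _ ≤ #{x ∈ nearSolutions N α δ | sqDiffs x = w} :=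
              card_le_card (filter_subset_filter _ (filter_subset _ _))
          _ ≤ #(sqDiffReps N w.1) * #(sqDiffReps N w.2) := card_filter_sqDiffs_eq_le N α δ w
          _ ≤ D ^ 2 := by
              rw [sq]
              exact Nat.mul_le_mul (hD _ hu (abs_le.2 (by simpa using mem_Icc.1 hwu)))
                (hD _ hv (abs_le.2 (by simpa using mem_Icc.1 hwv)))
    _ ≤ D ^ 2 * (2 * (2 * N ^ 2 + 1)) := by
        gcongr
        exact (card_filter_le _ _).trans (by simpa using card_nearPairs_le (N ^ 2) α hδ.le)
    _ ≤ 6 * D ^ 2 * N ^ 2 := by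
        have : 1 ≤ N ^ 2 := Nat.one_le_pow _ _ hN
        nlinarith

theorem card_nearSolutions_le {N : ℕ} (hN : 1 ≤ N) {α δ : ℝ} (hα : 1 / 2 ≤ α) (hδ : δ < 1)
    {D : ℕ} (hD : ∀ u : ℤ, u ≠ 0 → |u| ≤ N ^ 2 → #(sqDiffReps N u) ≤ D) :
    #(nearSolutions N α δ) ≤ (1 + 6 * D ^ 2) * N ^ 2 := by
  rw [← card_filter_add_card_filter_not fun x : ℤ × ℤ × ℤ × ℤ =>
    x.1 = x.2.2.1 ∧ x.2.1 = x.2.2.2, add_mul, one_mul]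
  exact add_le_add (card_filter_diagonal_nearSolutions_le N α δ)
    (card_filter_not_diagonal_nearSolutions_le hN hα hδ hD)

lemma card_sqDiffReps_le_mul_rpow {C η : ℝ} (hC : 0 ≤ C) (hη : 0 ≤ η)
    (hdiv : ∀ n : ℕ, n ≠ 0 → (#n.divisors : ℝ) ≤ C * (n : ℝ) ^ η) {N : ℕ} {u : ℤ} (hu : u ≠ 0)
    (hle : |u| ≤ N ^ 2) : (#(sqDiffReps N u) : ℝ) ≤ C * (N : ℝ) ^ (2 * η) :=
  calc (#(sqDiffReps N u) : ℝ) ≤ #u.natAbs.divisors := by exact_mod_cast card_sqDiffReps_le N hu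
    _ ≤ C * (u.natAbs : ℝ) ^ η := hdiv _ (Int.natAbs_ne_zero.2 hu)
    _ ≤ C * ((N : ℝ) ^ 2) ^ η := by
        gcongr; exact_mod_cast (show (u.natAbs : ℤ) ≤ N ^ 2 by rwa [Int.natCast_natAbs])
    _ = C * (N : ℝ) ^ (2 * η) := by rw [← Real.rpow_natCast_mul (Nat.cast_nonneg N)]; norm_num

lemma mem_Icc_of_div_four_le {N : ℕ} (hN : 1 ≤ N) {z : ℤ} (h : (N : ℝ) / 4 ≤ z ∧ (z : ℝ) ≤ N) :
    z ∈ Icc 1 (N : ℤ) := by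
  have : (0 : ℤ) < z := by exact_mod_cast (show (0 : ℝ) < z from lt_of_lt_of_le (by positivity) h.1)
  exact mem_Icc.2 ⟨this, by exact_mod_cast h.2⟩

open Set

theorem stmt_0 :
    ∀ ε : ℝ, 0 < ε → ∃ C : ℝ, 0 < C ∧
      ∀ N : ℕ, 1 ≤ N → ∀ δ : ℝ, 0 < δ → δ < 1 →
        ∀ α₂ : ℝ, α₂ ∈ Set.Icc (1/2 : ℝ) 1 →
          (Set.ncard {x : ℤ × ℤ × ℤ × ℤ |
              ((N : ℝ)/4 ≤ (x.1 : ℝ) ∧ (x.1 : ℝ) ≤ N) ∧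
              ((N : ℝ)/4 ≤ (x.2.1 : ℝ) ∧ (x.2.1 : ℝ) ≤ N) ∧
              ((N : ℝ)/4 ≤ (x.2.2.1 : ℝ) ∧ (x.2.2.1 : ℝ) ≤ N) ∧
              ((N : ℝ)/4 ≤ (x.2.2.2 : ℝ) ∧ (x.2.2.2 : ℝ) ≤ N) ∧
              |((x.1 : ℝ)^2 - (x.2.2.1 : ℝ)^2) + α₂ * ((x.2.1 : ℝ)^2 - (x.2.2.2 : ℝ)^2)| < δ}
            : ℝ) ≤ C * (N : ℝ) ^ (2 + ε : ℝ) := by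
  intro ε hε
  obtain ⟨C₀, hC₀, hdiv⟩ := exists_card_divisors_le_mul_rpow (by positivity : 0 < ε / 4)
  refine ⟨1 + 6 * C₀ ^ 2, by positivity, fun N hN δ _ hδ α₂ hα => ?_⟩
  set D := ⌊C₀ * (N : ℝ) ^ (2 * (ε / 4))⌋₊
  have hD (u : ℤ) (hu : u ≠ 0) (hle : |u| ≤ N ^ 2) : #(sqDiffReps N u) ≤ D :=
    Nat.le_floor (card_sqDiffReps_le_mul_rpow hC₀.le (by positivity) hdiv hu hle)
  have hDsq : (D : ℝ) ^ 2 ≤ C₀ ^ 2 * (N : ℝ) ^ ε := by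
    calc (D : ℝ) ^ 2 ≤ (C₀ * (N : ℝ) ^ (2 * (ε / 4))) ^ 2 := by
          gcongr; exact Nat.floor_le (by positivity)
      _ = C₀ ^ 2 * (N : ℝ) ^ ε := by rw [mul_pow, ← Real.rpow_mul_natCast (by positivity)]; ring_nf
  refine le_trans (Nat.cast_le.2 <| (Set.ncard_le_ncard (t := ↑(nearSolutions N α₂ δ))
    (fun x hx => ?_) (finite_toSet _)).trans_eq (Set.ncard_coe_finset _)) ?_
  · obtain ⟨h1, h2, h3, h4, hlt⟩ := hx
    exact mem_filter.2 ⟨mem_product.2 ⟨mem_Icc_of_div_four_le hN h1, mem_product.2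
      ⟨mem_Icc_of_div_four_le hN h2, mem_product.2 ⟨mem_Icc_of_div_four_le hN h3,
        mem_Icc_of_div_four_le hN h4⟩⟩⟩, hlt⟩
  have hNε : 1 ≤ (N : ℝ) ^ ε := Real.one_le_rpow (by exact_mod_cast hN) hε.le
  calc (#(nearSolutions N α₂ δ) : ℝ) ≤ (1 + 6 * (D : ℝ) ^ 2) * (N : ℝ) ^ 2 := by
        exact_mod_cast card_nearSolutions_le hN hα.1 hδ hD
    _ ≤ (1 + 6 * C₀ ^ 2) * (N : ℝ) ^ ε * (N : ℝ) ^ 2 := by gcongr; nlinarith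
    _ = (1 + 6 * C₀ ^ 2) * (N : ℝ) ^ (2 + ε : ℝ) := by
        rw [Real.rpow_add (by positivity), Real.rpow_two]; ring
end

section
/- Let N ≥ 2 and for real t define H_N(t) = Σ_{N < n ≤ 2N} n^{it}. Then there is an absolute constant c such that |H_N(t)| ≤ c·(N/|t| + √|t|) for all t ≠ 0. -/
/-!
Write `n ^ (i t) = exp (i F n)` with `F n = t log n`. The phase increment `θ n = F (n + 1) - F n`
lies in `[t / (n + 1), t / n]` and decreases by at least `t / (2N)²` per step on `(N, 2N]`.

Kusmin–Landau: if `θ` is antitone with values in `[δ, 2π - δ]`, then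
`exp (i F n) = c n (exp (i F (n + 1)) - exp (i F n))` with `c n = (exp (i θ n) - 1)⁻¹`, whose
imaginary part `-cot (θ n / 2) / 2` is monotone and bounded by `1 / δ`; summation by parts then
bounds the sum by `O(1 / δ)`. For `t ≤ N` this applies directly with `δ ≍ t / N`.

For `N < t ≤ N²`, sort the `n` by the window `[2πν - δ, 2π(ν + 1) - δ)` containing `θ n`; there are
`O(t / N)` windows. Where `θ n - 2πν ≥ δ` the `n` form an interval, on which Kusmin–Landau applies
to `F n - 2πνn`; the `n` with `|θ n - 2πν| < δ` number `O(δ N² / t)` by the decay of `θ`.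
Taking `δ = √t / (2N)` gives `O(√t)`. For `t > N²` the trivial bound `N < √t` suffices, and
negative `t` reduces to positive `t` by complex conjugation.
-/

open Complex Finset
open scoped Real fwdDiff

namespace Real

lemma cot_le_cot_of_le {x y : ℝ} (hx : 0 < x) (hxy : x ≤ y) (hy : y < π) : cot y ≤ cot x := by
  have hsx : 0 < sin x := sin_pos_of_pos_of_lt_pi hx (hxy.trans_lt hy)
  have hsy : 0 < sin y := sin_pos_of_pos_of_lt_pi (hx.trans_le hxy) hy
  have hsyx : 0 ≤ sin (y - x) := sin_nonneg_of_nonneg_of_le_pi (by linarith) (by linarith)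
  rw [cot_eq_cos_div_sin, cot_eq_cos_div_sin, div_le_div_iff₀ hsy hsx]
  nlinarith [sin_sub y x]

lemma cot_le_inv {x : ℝ} (hx : 0 < x) (hxπ : x < π) : cot x ≤ x⁻¹ := by
  have hs : 0 < sin x := sin_pos_of_pos_of_lt_pi hx hxπ
  rw [cot_eq_cos_div_sin, div_le_iff₀ hs]
  rcases lt_or_ge x (π / 2) with hx2 | hx2
  · have hc : 0 < cos x := cos_pos_of_mem_Ioo ⟨by linarith, hx2⟩
    have ht := lt_tan hx hx2
    rw [tan_eq_sin_div_cos, lt_div_iff₀ hc] at ht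
    rw [inv_mul_eq_div, le_div_iff₀ hx]
    linarith
  · have : cos x ≤ 0 := cos_nonpos_of_pi_div_two_le_of_le hx2 (by linarith)
    have : 0 < x⁻¹ * sin x := by positivity
    linarith

lemma cot_pi_sub (x : ℝ) : cot (π - x) = -cot x := by
  rw [cot_eq_cos_div_sin, cot_eq_cos_div_sin, cos_pi_sub, sin_pi_sub, neg_div]

lemma abs_cot_half_le {δ θ : ℝ} (hδ : 0 < δ) (h₁ : δ ≤ θ) (h₂ : θ ≤ 2 * π - δ) :
    |cot (θ / 2)| ≤ 2 / δ := by
  have hcot : cot (δ / 2) ≤ 2 / δ := by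
    simpa using cot_le_inv (x := δ / 2) (by positivity) (by linarith)
  have hupper := cot_le_cot_of_le (x := δ / 2) (y := θ / 2) (by positivity) (by linarith)
    (by linarith)
  have hlower := cot_le_cot_of_le (x := δ / 2) (y := π - θ / 2) (by positivity) (by linarith)
    (by linarith)
  rw [cot_pi_sub] at hlower
  exact abs_le.2 ⟨by linarith, by linarith⟩

lemma inv_add_one_le_log_add_one_sub_log {x : ℝ} (hx : 0 < x) :
    (x + 1)⁻¹ ≤ log (x + 1) - log x := by
  have := one_sub_inv_le_log_of_pos (x := (x + 1) / x) (by positivity)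
  rw [log_div (by positivity) hx.ne', inv_div] at this
  convert this using 1
  field_simp
  ring

lemma log_add_one_sub_log_le_inv {x : ℝ} (hx : 0 < x) : log (x + 1) - log x ≤ x⁻¹ := by
  have := log_le_sub_one_of_pos (x := (x + 1) / x) (by positivity)
  rw [log_div (by positivity) hx.ne'] at this
  convert this using 1
  field_simp
  ring

lemma inv_add_one_sq_le_two_mul_log_sub {x : ℝ} (hx : 0 < x) :
    ((x + 1) ^ 2)⁻¹ ≤ 2 * log (x + 1) - log x - log (x + 2) := by
  have := log_le_sub_one_of_pos (x := x * (x + 2) / (x + 1) ^ 2) (by positivity)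
  rw [log_div (by positivity) (by positivity), log_mul hx.ne' (by positivity), log_pow] at this
  have h : x * (x + 2) / (x + 1) ^ 2 - 1 = -((x + 1) ^ 2)⁻¹ := by field_simp; ring
  push_cast at this
  linarith

end Real

lemma exp_mul_I_ne_one {θ : ℝ} (h₀ : 0 < θ) (h₁ : θ < 2 * π) : exp (θ * I) ≠ 1 := by
  rw [Ne, Complex.exp_eq_one_iff]
  rintro ⟨n, hn⟩
  have hθ : θ = n * (2 * π) := by simpa using congrArg Complex.im hn
  have h0 : (0 : ℝ) < n := by nlinarith [Real.pi_pos]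
  have h1 : (n : ℝ) < 1 := by nlinarith [Real.pi_pos]
  norm_cast at h0 h1
  omega

lemma inv_exp_mul_I_sub_one {θ : ℝ} (h₀ : 0 < θ) (h₁ : θ < 2 * π) :
    (exp (θ * I) - 1)⁻¹ = -1 / 2 - Real.cot (θ / 2) / 2 * I := by
  have hne : exp (θ * I) - 1 ≠ 0 := sub_ne_zero.2 (exp_mul_I_ne_one h₀ h₁)
  have hne' : 1 - exp (θ * I) ≠ 0 := sub_ne_zero.2 (exp_mul_I_ne_one h₀ h₁).symm
  rw [ofReal_cot, cot_eq_exp_ratio, ofReal_div, ofReal_ofNat,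
    show 2 * I * ((θ : ℂ) / 2) = θ * I by ring]
  field_simp
  ring_nf

lemma norm_inv_exp_mul_I_sub_one_le {δ θ : ℝ} (hδ : 0 < δ) (hθ : θ ∈ Set.Icc δ (2 * π - δ)) :
    ‖(exp (θ * I) - 1)⁻¹‖ ≤ 1 / 2 + 1 / δ := by
  rw [inv_exp_mul_I_sub_one (hδ.trans_le hθ.1) (by linarith [hθ.2])]
  refine (norm_sub_le _ _).trans ?_
  have := Real.abs_cot_half_le hδ hθ.1 hθ.2
  simp only [norm_div, norm_neg, norm_one, Complex.norm_ofNat, norm_mul, norm_I, mul_one,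
    Complex.norm_real, Real.norm_eq_abs]
  linarith [show 2 / δ / 2 = 1 / δ by ring]

lemma norm_inv_exp_mul_I_sub_one_sub {θ θ' : ℝ} (h₀ : 0 < θ') (hle : θ' ≤ θ) (h₁ : θ < 2 * π) :
    ‖(exp (θ' * I) - 1)⁻¹ - (exp (θ * I) - 1)⁻¹‖ = (Real.cot (θ' / 2) - Real.cot (θ / 2)) / 2 := by
  have hcot := Real.cot_le_cot_of_le (x := θ' / 2) (y := θ / 2) (by linarith) (by linarith)
    (by linarith)
  rw [inv_exp_mul_I_sub_one (h₀.trans_le hle) h₁, inv_exp_mul_I_sub_one h₀ (hle.trans_lt h₁),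
    show -1 / 2 - (Real.cot (θ' / 2) : ℂ) / 2 * I - (-1 / 2 - Real.cot (θ / 2) / 2 * I)
      = ((Real.cot (θ / 2) - Real.cot (θ' / 2)) / 2 : ℝ) * I by push_cast; ring,
    norm_mul, norm_I, mul_one, Complex.norm_real, Real.norm_eq_abs, abs_of_nonpos (by linarith)]
  ring

lemma norm_sum_Ico_smul_sub_le {𝕜 E : Type*} [NormedField 𝕜] [SeminormedAddCommGroup E]
    [NormedSpace 𝕜 E] {c : ℕ → 𝕜} {u : ℕ → E} {A B : ℕ} (hu : ∀ n, ‖u n‖ ≤ 1) :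
    ‖∑ n ∈ Ico A B, c n • (u (n + 1) - u n)‖
      ≤ 2 * (‖c (B - 1)‖ + ‖c A‖ + ∑ i ∈ Ico A (B - 1), ‖c (i + 1) - c i‖) := by
  rcases le_or_gt B A with hBA | hAB
  · rw [Ico_eq_empty_of_le hBA, sum_empty, norm_zero]
    positivity
  have hG : ∀ k, ‖∑ i ∈ range k, (u (i + 1) - u i)‖ ≤ 2 := fun k ↦ by
    rw [sum_range_sub]
    linarith [norm_sub_le (u k) (u 0), hu k, hu 0]
  have hterm : ∀ (a : 𝕜) k, ‖a • ∑ i ∈ range k, (u (i + 1) - u i)‖ ≤ ‖a‖ * 2 := fun a k ↦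
    (norm_smul_le _ _).trans (mul_le_mul_of_nonneg_left (hG k) (norm_nonneg a))
  rw [sum_Ico_by_parts _ _ hAB]
  calc _ ≤ ‖c (B - 1)‖ * 2 + ‖c A‖ * 2 + ∑ i ∈ Ico A (B - 1), ‖c (i + 1) - c i‖ * 2 :=
        (norm_sub_le _ _).trans (add_le_add ((norm_sub_le _ _).trans
          (add_le_add (hterm _ _) (hterm _ _))) ((norm_sum_le _ _).trans
          (sum_le_sum fun i _ ↦ hterm _ _)))
    _ = _ := by rw [← sum_mul]; ring

theorem kusmin_landau {F : ℕ → ℝ} {A B : ℕ} {δ : ℝ} (hδ : 0 < δ)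
    (hanti : AntitoneOn (Δ_[1] F) (Ico A B))
    (hband : ∀ n ∈ Ico A B, Δ_[1] F n ∈ Set.Icc δ (2 * π - δ)) :
    ‖∑ n ∈ Ico A B, exp (F n * I)‖ ≤ 2 + 8 / δ := by
  set θ := Δ_[1] F
  set c : ℕ → ℂ := fun n ↦ (exp (θ n * I) - 1)⁻¹
  set g : ℕ → ℝ := fun n ↦ Real.cot (θ n / 2)
  have hθ : ∀ n ∈ Ico A B, 0 < θ n ∧ θ n < 2 * π := fun n hn ↦
    ⟨hδ.trans_le (hband n hn).1, by linarith [(hband n hn).2]⟩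
  have hstep : ∀ n ∈ Ico A B, exp (F n * I) = c n • (exp (F (n + 1) * I) - exp (F n * I)) :=
    fun n hn ↦ by
    rw [show F (n + 1) = F n + θ n by simp [θ, fwdDiff], ofReal_add, add_mul, Complex.exp_add,
      smul_eq_mul, ← mul_sub_one, mul_left_comm, inv_mul_cancel₀ (sub_ne_zero.2
      (exp_mul_I_ne_one (hθ n hn).1 (hθ n hn).2)), mul_one]
  rcases le_or_gt B A with hBA | hAB
  · rw [Ico_eq_empty_of_le hBA, sum_empty, norm_zero]
    positivity
  have hA : A ∈ Ico A B := by simp only [mem_Ico]; omega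
  have hB : B - 1 ∈ Ico A B := by simp only [mem_Ico]; omega
  have hvar : ∀ i ∈ Ico A (B - 1), ‖c (i + 1) - c i‖ = (g (i + 1) - g i) / 2 := fun i hi ↦ by
    have hi₀ : i ∈ Ico A B := by simp only [mem_Ico] at hi ⊢; omega
    have hi₁ : i + 1 ∈ Ico A B := by simp only [mem_Ico] at hi ⊢; omega
    exact norm_inv_exp_mul_I_sub_one_sub (hθ _ hi₁).1
      (hanti (mem_coe.2 hi₀) (mem_coe.2 hi₁) (Nat.le_succ i)) (hθ _ hi₀).2
  have htotal : ∑ i ∈ Ico A (B - 1), ‖c (i + 1) - c i‖ ≤ 2 / δ := by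
    rw [sum_congr rfl hvar, ← sum_div, sum_Ico_sub g (by omega)]
    linarith [abs_le.1 (Real.abs_cot_half_le hδ (hband _ hA).1 (hband _ hA).2),
      abs_le.1 (Real.abs_cot_half_le hδ (hband _ hB).1 (hband _ hB).2)]
  calc ‖∑ n ∈ Ico A B, exp (F n * I)‖
      = ‖∑ n ∈ Ico A B, c n • (exp (F (n + 1) * I) - exp (F n * I))‖ := by
        rw [sum_congr rfl hstep]
    _ ≤ 2 * (‖c (B - 1)‖ + ‖c A‖ + ∑ i ∈ Ico A (B - 1), ‖c (i + 1) - c i‖) :=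
        norm_sum_Ico_smul_sub_le fun n ↦ (norm_exp_ofReal_mul_I _).le
    _ ≤ 2 * ((1 / 2 + 1 / δ) + (1 / 2 + 1 / δ) + 2 / δ) := by
        gcongr
        exacts [norm_inv_exp_mul_I_sub_one_le hδ (hband _ hB),
          norm_inv_exp_mul_I_sub_one_le hδ (hband _ hA)]
    _ = 2 + 8 / δ := by ring

lemma Finset.exists_eq_Ico_of_ordConnected {S : Finset ℕ} (hS : (S : Set ℕ).OrdConnected) :
    ∃ a b, S = Ico a b := by
  rcases S.eq_empty_or_nonempty with rfl | hne
  · exact ⟨0, 0, by simp⟩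
  refine ⟨S.min' hne, S.max' hne + 1, Finset.ext fun n ↦ ⟨fun hn ↦ ?_, fun hn ↦ ?_⟩⟩
  · exact mem_Ico.2 ⟨S.min'_le n hn, Nat.lt_succ_of_le (S.le_max' n hn)⟩
  · rw [mem_Ico, Nat.lt_succ_iff] at hn
    exact hS.out (S.min'_mem hne) (S.max'_mem hne) hn

lemma Finset.card_le_of_forall_sub_le {S : Finset ℕ} {D : ℝ} (hD : 0 ≤ D)
    (h : ∀ m ∈ S, ∀ n ∈ S, (n : ℝ) - m ≤ D) : (#S : ℝ) ≤ D + 1 := by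
  rcases S.eq_empty_or_nonempty with rfl | hne
  · simp only [card_empty, Nat.cast_zero]
    linarith
  have hsub : S ⊆ Icc (S.min' hne) (S.max' hne) := fun n hn ↦
    mem_Icc.2 ⟨S.min'_le n hn, S.le_max' n hn⟩
  have hcard : #S ≤ S.max' hne + 1 - S.min' hne := by
    simpa using card_le_card hsub
  have hle := S.min'_le _ (S.max'_mem hne)
  have hdiam := h _ (S.min'_mem hne) _ (S.max'_mem hne)
  have : (#S : ℝ) ≤ ((S.max' hne + 1 - S.min' hne : ℕ) : ℝ) := by exact_mod_cast hcard
  push_cast [Nat.sub_add_comm hle, Nat.cast_sub hle] at this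
  linarith

lemma mul_sub_le_sub_of_forall_le_sub_succ {f : ℕ → ℝ} {κ : ℝ} {m n : ℕ} (hmn : m ≤ n)
    (h : ∀ k ∈ Ico m n, κ ≤ f k - f (k + 1)) : κ * (n - m) ≤ f m - f n := by
  have htel : ∑ k ∈ Ico m n, (f k - f (k + 1)) = f m - f n := by
    rw [← neg_sub (f n), ← sum_Ico_sub f hmn, ← sum_neg_distrib]
    simp only [neg_sub]
  have := sum_le_sum h
  rwa [sum_const, Nat.card_Ico, nsmul_eq_mul, Nat.cast_sub hmn, htel, mul_comm] at this

lemma antitoneOn_of_forall_mul_sub_le {f : ℕ → ℝ} {s : Set ℕ} {κ : ℝ} (hκ : 0 ≤ κ)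
    (h : ∀ m ∈ s, ∀ n ∈ s, m ≤ n → κ * (n - m) ≤ f m - f n) : AntitoneOn f s :=
  fun m hm n hn hmn ↦ by
    have : (m : ℝ) ≤ n := by exact_mod_cast hmn
    nlinarith [h m hm n hn hmn]

lemma norm_sum_exp_mul_I_le_card {ι : Type*} (s : Finset ι) (F : ι → ℝ) :
    ‖∑ i ∈ s, exp (F i * I)‖ ≤ #s := by
  simpa using norm_sum_le_of_le s fun i _ ↦ (norm_exp_ofReal_mul_I (F i)).le

lemma norm_sum_exp_neg_mul_I {ι : Type*} (s : Finset ι) (F : ι → ℝ) :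
    ‖∑ i ∈ s, exp ((-F i : ℝ) * I)‖ = ‖∑ i ∈ s, exp ((F i : ℝ) * I)‖ := by
  rw [← RCLike.norm_conj, map_sum]
  congr 2 with i
  rw [← exp_conj, map_mul, conj_ofReal, conj_I]
  push_cast
  ring_nf

section SecondDifference

variable {F : ℕ → ℝ} {A B : ℕ} {κ δ : ℝ}

lemma norm_sum_exp_fwdDiff_far_le (ν : ℕ) (hδ : 0 < δ) (hanti : AntitoneOn (Δ_[1] F) (Ico A B)) :
    ‖∑ n ∈ Ico A B with Δ_[1] F n - 2 * π * ν ∈ Set.Ico δ (2 * π - δ), exp (F n * I)‖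
      ≤ 2 + 8 / δ := by
  set G : ℕ → ℝ := fun n ↦ F n - 2 * π * ν * n
  have hG : ∀ n, Δ_[1] G n = Δ_[1] F n - 2 * π * ν := fun n ↦ by
    simp only [G, fwdDiff]; push_cast; ring
  have hGanti : AntitoneOn (Δ_[1] G) (Ico A B) := fun m hm n hn hmn ↦ by
    rw [hG, hG]; linarith [hanti hm hn hmn]
  obtain ⟨a, b, hab⟩ : ∃ a b, {n ∈ Ico A B | Δ_[1] G n ∈ Set.Ico δ (2 * π - δ)} = Ico a b := by
    refine Finset.exists_eq_Ico_of_ordConnected ?_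
    obtain ⟨u, hu, hequ⟩ :=
      (Set.ordConnected_Ico (a := δ) (b := 2 * π - δ)).preimage_antitoneOn hGanti
    rw [coe_filter]
    change (↑(Ico A B) ∩ Δ_[1] G ⁻¹' Set.Ico δ (2 * π - δ)).OrdConnected
    rw [hequ, coe_Ico]
    exact Set.ordConnected_Ico.inter hu
  have hexp : ∀ n : ℕ, exp (F n * I) = exp (G n * I) := fun n ↦ by
    rw [show (G n : ℂ) * I = F n * I - (ν * n : ℕ) * (2 * π * I) by simp only [G]; push_cast; ring,
      Complex.exp_sub, exp_nat_mul_two_pi_mul_I, div_one]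
  simp_rw [← hG, hab, hexp]
  refine kusmin_landau hδ (hGanti.mono (coe_subset.2 ?_)) fun n hn ↦ ?_
  · rw [← hab]; exact filter_subset _ _
  · rw [← hab, mem_filter] at hn
    exact Set.Ico_subset_Icc_self hn.2

lemma card_fwdDiff_near_le (ν : ℕ) (hκ : 0 < κ) (hδ : 0 < δ)
    (hgap : ∀ m ∈ Ico A B, ∀ n ∈ Ico A B, m ≤ n → κ * (n - m) ≤ Δ_[1] F m - Δ_[1] F n) :
    (#{n ∈ Ico A B | Δ_[1] F n - 2 * π * ν ∈ Set.Ico (-δ) δ} : ℝ) ≤ 2 * δ / κ + 1 := by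
  refine Finset.card_le_of_forall_sub_le (by positivity) fun m hm n hn ↦ ?_
  rw [mem_filter] at hm hn
  rcases le_or_gt m n with hmn | hnm
  · rw [le_div_iff₀ hκ, mul_comm]
    linarith [hgap m hm.1 n hn.1 hmn, hm.2.1, hm.2.2, hn.2.1, hn.2.2]
  · have : (n : ℝ) < m := by exact_mod_cast hnm
    linarith [show 0 ≤ 2 * δ / κ by positivity]

lemma norm_sum_exp_fwdDiff_window_le (ν : ℕ) (hκ : 0 < κ) (hδ : 0 < δ) (hδ₁ : δ ≤ 1)
    (hgap : ∀ m ∈ Ico A B, ∀ n ∈ Ico A B, m ≤ n → κ * (n - m) ≤ Δ_[1] F m - Δ_[1] F n) :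
    ‖∑ n ∈ Ico A B with Δ_[1] F n - 2 * π * ν ∈ Set.Ico (-δ) (2 * π - δ), exp (F n * I)‖
      ≤ 3 + 8 / δ + 2 * δ / κ := by
  rw [← sum_filter_add_sum_filter_not _ (fun n ↦ δ ≤ Δ_[1] F n - 2 * π * ν), filter_filter,
    filter_filter]
  have hfar : {n ∈ Ico A B | Δ_[1] F n - 2 * π * ν ∈ Set.Ico (-δ) (2 * π - δ) ∧
      δ ≤ Δ_[1] F n - 2 * π * ν} = {n ∈ Ico A B | Δ_[1] F n - 2 * π * ν ∈ Set.Ico δ (2 * π - δ)} :=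
    filter_congr fun n _ ↦ by
      rw [Set.mem_Ico, Set.mem_Ico]
      exact ⟨fun ⟨⟨_, h₂⟩, h₃⟩ ↦ ⟨h₃, h₂⟩, fun ⟨h₁, h₂⟩ ↦ ⟨⟨by linarith, h₂⟩, h₁⟩⟩
  have hnear : {n ∈ Ico A B | Δ_[1] F n - 2 * π * ν ∈ Set.Ico (-δ) (2 * π - δ) ∧
      ¬δ ≤ Δ_[1] F n - 2 * π * ν} = {n ∈ Ico A B | Δ_[1] F n - 2 * π * ν ∈ Set.Ico (-δ) δ} :=
    filter_congr fun n _ ↦ by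
      rw [Set.mem_Ico, Set.mem_Ico, not_le]
      exact ⟨fun ⟨⟨h₁, _⟩, h₃⟩ ↦ ⟨h₁, h₃⟩,
        fun ⟨h₁, h₂⟩ ↦ ⟨⟨h₁, by linarith [Real.pi_gt_three]⟩, h₂⟩⟩
  rw [hfar, hnear]
  calc _ ≤ _ := norm_add_le _ _
    _ ≤ (2 + 8 / δ) + (2 * δ / κ + 1) := add_le_add
        (norm_sum_exp_fwdDiff_far_le ν hδ (antitoneOn_of_forall_mul_sub_le hκ.le hgap))
        ((norm_sum_exp_mul_I_le_card _ _).trans (card_fwdDiff_near_le ν hκ hδ hgap))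
    _ = 3 + 8 / δ + 2 * δ / κ := by ring

theorem norm_sum_exp_le_of_fwdDiff_gap (hκ : 0 < κ) (hδ : 0 < δ) (hδ₁ : δ ≤ 1) {Θ : ℝ}
    (hΘ : 0 ≤ Θ) (hθ : ∀ n ∈ Ico A B, Δ_[1] F n ∈ Set.Icc 0 Θ)
    (hgap : ∀ m ∈ Ico A B, ∀ n ∈ Ico A B, m ≤ n → κ * (n - m) ≤ Δ_[1] F m - Δ_[1] F n) :
    ‖∑ n ∈ Ico A B, exp (F n * I)‖ ≤ (Θ + 2) * (3 + 8 / δ + 2 * δ / κ) := by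
  set window : ℕ → ℕ := fun n ↦ ⌊(Δ_[1] F n + δ) / (2 * π)⌋₊
  have hwindow : ∀ ν : ℕ, {n ∈ Ico A B | window n = ν}
      = {n ∈ Ico A B | Δ_[1] F n - 2 * π * ν ∈ Set.Ico (-δ) (2 * π - δ)} := fun ν ↦
    filter_congr fun n hn ↦ by
      have := (hθ n hn).1
      rw [Nat.floor_eq_iff (by positivity), le_div_iff₀ (by positivity),
        div_lt_iff₀ (by positivity), Set.mem_Ico]
      constructor <;> rintro ⟨h₁, h₂⟩ <;> constructor <;> linarith
  set V := ⌊(Θ + δ) / (2 * π)⌋₊ + 1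
  have hmaps : ∀ n ∈ Ico A B, window n ∈ range V := fun n hn ↦
    mem_range.2 (Nat.lt_succ_of_le (Nat.floor_le_floor (by gcongr; exact (hθ n hn).2)))
  have hV : (V : ℝ) ≤ Θ + 2 := by
    have h2π : 1 ≤ 2 * π := by linarith [Real.pi_gt_three]
    have := Nat.floor_le (a := (Θ + δ) / (2 * π)) (by positivity)
    have := div_le_self (a := Θ + δ) (by positivity) h2π
    push_cast [V]
    linarith
  rw [← sum_fiberwise_of_maps_to hmaps]
  calc _ ≤ ∑ ν ∈ range V, ‖∑ n ∈ Ico A B with window n = ν, exp (F n * I)‖ := norm_sum_le _ _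
    _ ≤ ∑ ν ∈ range V, (3 + 8 / δ + 2 * δ / κ) := sum_le_sum fun ν _ ↦ by
        rw [hwindow ν]
        exact norm_sum_exp_fwdDiff_window_le ν hκ hδ hδ₁ hgap
    _ ≤ (Θ + 2) * (3 + 8 / δ + 2 * δ / κ) := by
        rw [sum_const, card_range, nsmul_eq_mul]
        gcongr

end SecondDifference

section LogPhase

variable {t : ℝ}

lemma fwdDiff_mul_log_mem_Icc (ht : 0 ≤ t) {n : ℕ} (hn : 0 < n) :
    Δ_[1] (fun n : ℕ ↦ t * Real.log n) n ∈ Set.Icc (t / (n + 1)) (t / n) := by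
  have hn' : (0 : ℝ) < n := by exact_mod_cast hn
  simp only [fwdDiff, Nat.cast_add, Nat.cast_one, ← mul_sub, div_eq_mul_inv]
  exact ⟨mul_le_mul_of_nonneg_left (Real.inv_add_one_le_log_add_one_sub_log hn') ht,
    mul_le_mul_of_nonneg_left (Real.log_add_one_sub_log_le_inv hn') ht⟩

lemma mul_sub_le_fwdDiff_mul_log_sub (ht : 0 ≤ t) {m n M : ℕ} (hm : 0 < m) (hmn : m ≤ n)
    (hnM : n ≤ M) :
    t / M ^ 2 * (n - m)
      ≤ Δ_[1] (fun n : ℕ ↦ t * Real.log n) m - Δ_[1] (fun n : ℕ ↦ t * Real.log n) n := by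
  refine mul_sub_le_sub_of_forall_le_sub_succ hmn fun k hk ↦ ?_
  rw [mem_Ico] at hk
  have hk' : (0 : ℝ) < k := by exact_mod_cast hm.trans_le hk.1
  have hkM : (k : ℝ) + 1 ≤ M := by exact_mod_cast (by omega : k + 1 ≤ M)
  have := Real.inv_add_one_sq_le_two_mul_log_sub hk'
  simp only [fwdDiff, Nat.cast_add, Nat.cast_one]
  calc t / M ^ 2 ≤ t * (((k : ℝ) + 1) ^ 2)⁻¹ := by
        rw [div_eq_mul_inv]; gcongr
    _ ≤ _ := by
        rw [show (k : ℝ) + 1 + 1 = k + 2 by ring]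
        linarith [mul_le_mul_of_nonneg_left this ht]

lemma norm_sum_exp_mul_log_le_of_le {N : ℕ} (ht : 0 < t) (htN : t ≤ N) :
    ‖∑ n ∈ Ioc N (2 * N), exp ((t * Real.log n : ℝ) * I)‖ ≤ 26 * (N / t) := by
  have hN : (1 : ℝ) ≤ N := by
    exact_mod_cast Nat.one_le_iff_ne_zero.2 (by rintro rfl; simp at htN; linarith)
  rw [← Ico_add_one_add_one_eq_Ioc]
  refine (kusmin_landau (δ := t / (3 * N)) (by positivity)
    (antitoneOn_of_forall_mul_sub_le (κ := t / ((2 * N : ℕ) : ℝ) ^ 2) (by positivity)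
      fun m hm n hn hmn ↦ ?_) fun n hn ↦ ?_).trans ?_
  · rw [mem_coe, mem_Ico] at hm hn
    exact mul_sub_le_fwdDiff_mul_log_sub ht.le (by omega) hmn (by omega)
  · rw [mem_Ico] at hn
    have hn' : (n : ℝ) + 1 ≤ 3 * N := by
      have : (n : ℝ) ≤ 2 * N := by exact_mod_cast (by omega : n ≤ 2 * N)
      linarith
    have hNn : (N : ℝ) ≤ n := by exact_mod_cast (by omega : N ≤ n)
    obtain ⟨h₁, h₂⟩ := fwdDiff_mul_log_mem_Icc ht.le (n := n) (by omega)
    refine ⟨(div_le_div_of_nonneg_left ht.le (by positivity) hn').trans h₁, h₂.trans ?_⟩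
    have : t / n ≤ 1 := (div_le_one (by linarith)).2 (by linarith)
    have : t / (3 * N) ≤ 1 := (div_le_one (by positivity)).2 (by linarith)
    linarith [Real.pi_gt_three]
  · have : 1 ≤ N / t := (one_le_div ht).2 htN
    rw [div_div_eq_mul_div]
    linarith [show 8 * (3 * N) / t = 24 * (N / t) by ring]

lemma norm_sum_exp_mul_log_le_of_lt_of_le {N : ℕ} (hNt : N < t) (htN : t ≤ N ^ 2) :
    ‖∑ n ∈ Ioc N (2 * N), exp ((t * Real.log n : ℝ) * I)‖ ≤ 69 * √t := by
  have ht : 0 < t := (Nat.cast_nonneg N).trans_lt hNt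
  obtain ⟨s, hs, rfl⟩ : ∃ s : ℝ, 0 < s ∧ t = s ^ 2 :=
    ⟨√t, Real.sqrt_pos.2 ht, (Real.sq_sqrt ht.le).symm⟩
  rw [Real.sqrt_sq hs.le]
  have hsN : s ≤ N := by simpa [Real.sqrt_sq hs.le] using Real.sqrt_le_sqrt htN
  have hN : (0 : ℝ) < N := hs.trans_le hsN
  have h2N : (0 : ℝ) < ((2 * N : ℕ) : ℝ) := by push_cast; positivity
  rw [← Ico_add_one_add_one_eq_Ioc]
  refine (norm_sum_exp_le_of_fwdDiff_gap (κ := s ^ 2 / ((2 * N : ℕ) : ℝ) ^ 2) (δ := s / (2 * N))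
    (Θ := s ^ 2 / N) (by positivity) (by positivity)
    ((div_le_one (by positivity)).2 (by linarith)) (by positivity) (fun n hn ↦ ?_)
    (fun m hm n hn hmn ↦ ?_)).trans ?_
  · rw [mem_Ico] at hn
    obtain ⟨h₁, h₂⟩ := fwdDiff_mul_log_mem_Icc ht.le (n := n) (by omega)
    refine ⟨(by positivity : (0 : ℝ) ≤ s ^ 2 / (n + 1)).trans h₁, h₂.trans ?_⟩
    exact div_le_div_of_nonneg_left ht.le hN (by exact_mod_cast (by omega : N ≤ n))
  · rw [mem_Ico] at hm hn
    exact mul_sub_le_fwdDiff_mul_log_sub ht.le (by omega) hmn (by omega)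
  · have hab : s ^ 2 / N * (N / s) = s := by field_simp
    have ha : 1 < s ^ 2 / N := (one_lt_div hN).2 hNt
    have ha' : s ^ 2 / N ≤ s := by rw [div_le_iff₀ hN]; nlinarith
    calc _ = (s ^ 2 / N + 2) * (3 + 20 * (N / s)) := by
          push_cast; field_simp; ring
      _ ≤ 69 * s := by nlinarith

theorem norm_sum_exp_mul_log_le (N : ℕ) (ht : 0 < t) :
    ‖∑ n ∈ Ioc N (2 * N), exp ((t * Real.log n : ℝ) * I)‖ ≤ 70 * (N / t + √t) := by
  have : 0 ≤ N / t := by positivity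
  have : 0 ≤ √t := Real.sqrt_nonneg t
  rcases le_or_gt t N with h₁ | h₁
  · linarith [norm_sum_exp_mul_log_le_of_le ht h₁]
  rcases le_or_gt t (N ^ 2) with h₂ | h₂
  · linarith [norm_sum_exp_mul_log_le_of_lt_of_le h₁ h₂]
  · have hcard : (#(Ioc N (2 * N)) : ℝ) < √t := by
      rw [Nat.card_Ioc, show 2 * N - N = N by omega]
      exact (Real.lt_sqrt (Nat.cast_nonneg _)).2 h₂
    linarith [norm_sum_exp_mul_I_le_card (Ioc N (2 * N)) fun n ↦ t * Real.log n]

theorem norm_sum_exp_mul_log_le_abs (N : ℕ) (ht : t ≠ 0) :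
    ‖∑ n ∈ Ioc N (2 * N), exp ((t * Real.log n : ℝ) * I)‖ ≤ 70 * (N / |t| + √|t|) := by
  rcases ht.lt_or_gt with h | h
  · rw [abs_of_neg h, ← norm_sum_exp_neg_mul_I]
    simpa only [neg_mul] using norm_sum_exp_mul_log_le N (neg_pos.2 h)
  · rw [abs_of_pos h]
    exact norm_sum_exp_mul_log_le N h

end LogPhase

lemma natCast_cpow_ofReal_mul_I {n : ℕ} (hn : n ≠ 0) (t : ℝ) :
    (n : ℂ) ^ ((t : ℂ) * I) = exp ((t * Real.log n : ℝ) * I) := by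
  rw [cpow_def_of_ne_zero (Nat.cast_ne_zero.2 hn), ← natCast_log]
  push_cast
  ring_nf

theorem stmt_3 :
    ∃ c : ℝ, 0 < c ∧ ∀ N : ℕ, 2 ≤ N → ∀ t : ℝ, t ≠ 0 →
      ‖∑ n ∈ Finset.Ioc N (2 * N), (n : ℂ) ^ ((t : ℂ) * Complex.I)‖ ≤
        c * ((N : ℝ) / |t| + Real.sqrt |t|) := by
  refine ⟨70, by norm_num, fun N _ t ht ↦ ?_⟩
  rw [sum_congr rfl fun n hn ↦ natCast_cpow_ofReal_mul_I (by simp at hn; omega) t]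
  exact norm_sum_exp_mul_log_le_abs N ht
end
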